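/- Let A₁, A₂ ∈ ℝ^{n×n} and suppose that every complex eigenvalue of A₁ + A₂ has strictly negative real part. Then there exists h₀ > 0 such that for all h ∈ (0, h₀), every complex eigenvalue of the matrix (I + h·A₂)(I + h·A₁) = I + h(A₁ + A₂ + h·A₂A₁) has absolute value strictly smaller than 1. (Applied with A_i = v_i′(θ*, ψ*) for the two partial update fields of a GAN, this shows that alternating gradient descent is locally convergent for small enough learning rates whenever the Jacobian of the full gradient vector field at the equilibrium has only eigenvalues with negative real part.) -/

import Mathlib

/-!
With `B = A₁ + A₂` and `C = A₂ A₁`, the eigenvalues of `1 + h (B + h C)` are `1 + h μ` for `μ` in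
the spectrum of `B + h C`. The spectrum is upper hemicontinuous, so for small `h` it stays in an
open set `{Re z < -ε, |z| < R}` around the spectrum of `B`; there
`|1 + h μ|² = 1 + h (2 Re μ + h |μ|²) < 1` as soon as `h R² < 2 ε`.
-/

open Filter Topology

theorem one_add_smul_mul_one_add_smul {R A : Type*} [CommSemiring R] [Semiring A] [Algebra R A]
    (h : R) (a b : A) : (1 + h • b) * (1 + h • a) = 1 + h • (a + b + h • (b * a)) := by
  simp only [add_mul, mul_add, one_mul, mul_one, smul_add, smul_mul_smul_comm, smul_smul]
  abel

theorem spectrum_one_add_smul {𝕜 A : Type*} [Field 𝕜] [Ring A] [Algebra 𝕜 A] {t : 𝕜}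
    (ht : t ≠ 0) (a : A) : spectrum 𝕜 (1 + t • a) = (fun μ => 1 + t * μ) '' spectrum 𝕜 a := by
  rw [← map_one (algebraMap 𝕜 A), ← spectrum.singleton_add_eq,
    show t • a = (Units.mk0 t ht) • a from rfl, spectrum.unit_smul_eq_smul, Set.singleton_add,
    ← Set.image_smul, Set.image_image]
  rfl

theorem Complex.norm_one_add_ofReal_mul_lt_one {h : ℝ} {μ : ℂ} (hh : 0 < h)
    (hμ : 2 * μ.re + h * ‖μ‖ ^ 2 < 0) : ‖1 + h * μ‖ < 1 := by
  have hsq : ‖1 + h * μ‖ ^ 2 = 1 + h * (2 * μ.re + h * ‖μ‖ ^ 2) := by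
    simp only [Complex.sq_norm, Complex.normSq_apply, Complex.add_re, Complex.add_im,
      Complex.one_re, Complex.one_im, Complex.mul_re, Complex.mul_im, Complex.ofReal_re,
      Complex.ofReal_im]
    ring
  nlinarith [norm_nonneg (1 + h * μ), mul_neg_of_pos_of_neg hh hμ]

theorem exists_spectrum_subset_re_lt_inter_ball {A : Type*} [NormedRing A] [NormedAlgebra ℂ A]
    [CompleteSpace A] {B : A} (hB : ∀ μ ∈ spectrum ℂ B, μ.re < 0) :
    ∃ ε > 0, ∃ R, spectrum ℂ B ⊆ {z | z.re < -ε} ∩ Metric.ball 0 R := by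
  obtain ⟨a, ha, hle⟩ := (spectrum.isCompact B).exists_forall_le' (f := fun z => -z.re)
    (by fun_prop) (a := 0) fun μ hμ => neg_pos.2 (hB μ hμ)
  obtain ⟨R, hR⟩ := (spectrum.isCompact B).isBounded.subset_ball (0 : ℂ)
  refine ⟨a / 2, half_pos ha, R, fun μ hμ => ⟨?_, hR hμ⟩⟩
  show μ.re < -(a / 2)
  linarith [hle μ hμ]

theorem eventually_spectrum_one_add_smul_subset_ball {A : Type*} [NormedRing A]
    [NormedAlgebra ℂ A] [CompleteSpace A] (B C : A) (hB : ∀ μ ∈ spectrum ℂ B, μ.re < 0) :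
    ∀ᶠ h : ℝ in 𝓝[>] 0, spectrum ℂ (1 + (h : ℂ) • (B + (h : ℂ) • C)) ⊆ Metric.ball 0 1 := by
  obtain ⟨ε, hε, R, hBU⟩ := exists_spectrum_subset_re_lt_inter_ball hB
  have hU : IsOpen ({z : ℂ | z.re < -ε} ∩ Metric.ball 0 R) :=
    (isOpen_lt Complex.continuous_re continuous_const).inter Metric.isOpen_ball
  have hpert : Tendsto (fun h : ℝ => B + (h : ℂ) • C) (𝓝[>] 0) (𝓝 B) := by
    have : Continuous fun h : ℝ => B + (h : ℂ) • C := by fun_prop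
    exact tendsto_nhdsWithin_of_tendsto_nhds (this.tendsto' 0 B (by simp))
  have hsmall : ∀ᶠ h : ℝ in 𝓝[>] 0, h * R ^ 2 < 2 * ε := by
    have : Tendsto (fun h : ℝ => h * R ^ 2) (𝓝 0) (𝓝 0) :=
      (continuous_id.mul continuous_const).tendsto' 0 0 (zero_mul _)
    exact eventually_nhdsWithin_of_eventually_nhds (this.eventually (gt_mem_nhds (by positivity)))
  filter_upwards [self_mem_nhdsWithin, hsmall,
    hpert.eventually ((upperHemicontinuous_spectrum ℂ A).forall_isOpen B _ hU hBU)]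
    with h (hpos : 0 < h) hsmall hspec
  rw [spectrum_one_add_smul (Complex.ofReal_ne_zero.2 hpos.ne')]
  rintro _ ⟨μ, hμ, rfl⟩
  obtain ⟨hre : μ.re < -ε, hnorm⟩ := hspec hμ
  rw [mem_ball_zero_iff] at hnorm ⊢
  refine Complex.norm_one_add_ofReal_mul_lt_one hpos ?_
  have := mul_le_mul_of_nonneg_left (pow_le_pow_left₀ (norm_nonneg μ) hnorm.le 2) hpos.le
  linarith

theorem altgd_locally_convergent_small_stepsize
    {n : ℕ} (A₁ A₂ : Matrix (Fin n) (Fin n) ℝ)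
    (hA : ∀ μ ∈ spectrum ℂ ((A₁ + A₂).map Complex.ofReal), μ.re < 0) :
    (∀ h : ℝ, (1 + h • A₂) * (1 + h • A₁) = 1 + h • (A₁ + A₂ + h • (A₂ * A₁))) ∧
    ∃ h₀ > 0, ∀ h : ℝ, 0 < h → h < h₀ →
      ∀ lam ∈ spectrum ℂ (((1 + h • A₂) * (1 + h • A₁)).map Complex.ofReal),
        ‖lam‖ < 1 := by
  refine ⟨fun h => one_add_smul_mul_one_add_smul h A₁ A₂, ?_⟩
  -- any Banach algebra norm on complex matrices serves; the statement itself is norm-free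
  let : NormedRing (Matrix (Fin n) (Fin n) ℂ) := Matrix.linftyOpNormedRing
  let : NormedAlgebra ℂ (Matrix (Fin n) (Fin n) ℂ) := Matrix.linftyOpNormedAlgebra
  have hmap (h : ℝ) : ((1 + h • A₂) * (1 + h • A₁)).map Complex.ofReal =
      1 + (h : ℂ) • ((A₁ + A₂).map Complex.ofReal + (h : ℂ) • (A₂ * A₁).map Complex.ofReal) := by
    ext i j
    simp [one_add_smul_mul_one_add_smul, Matrix.one_apply, apply_ite Complex.ofReal]
  obtain ⟨h₀, hh₀, hsub⟩ := mem_nhdsGT_iff_exists_Ioo_subset.1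
    (eventually_spectrum_one_add_smul_subset_ball _ ((A₂ * A₁).map Complex.ofReal) hA)
  refine ⟨h₀, hh₀, fun h hpos hlt lam hlam => ?_⟩
  rw [hmap] at hlam
  simpa using hsub ⟨hpos, hlt⟩ hlam
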